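/- Closure of the holonomy algebra under multiplication: let X be a type and let S be a set of functions X → Matrix.specialUnitaryGroup (Fin 2) ℂ that is closed under pointwise multiplication and pointwise inverse. Then the ℂ-linear span of the set of functions {x ↦ ½ Tr (u x) | u ∈ S} inside the algebra of functions X → ℂ is closed under pointwise multiplication; in particular, the set of finite complex linear combinations of the functions x ↦ ½ Tr(u x) is a (non-unital if S lacks the constant identity) subalgebra of X → ℂ. -/
import Mathlib


noncomputable section

open Matrix

private lemma trace_mul_adjugate_fin_two (A B : Matrix (Fin 2) (Fin 2) ℂ) :
    Matrix.trace A * Matrix.trace B =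
      Matrix.trace (A * B) + Matrix.trace (A * Matrix.adjugate B) := by
  simp [Matrix.trace_fin_two, Matrix.adjugate_fin_two, Matrix.mul_apply, Fin.sum_univ_two]
  ring

/-- Closure of the holonomy algebra under multiplication: if `S` is a set of
`SU(2)`-valued functions on `X` closed under pointwise multiplication and
pointwise inverse, then the `ℂ`-linear span of the functions
`x ↦ ½ Tr (u x)`, `u ∈ S`, is closed under pointwise multiplication. -/
theorem holonomy_span_mul_closed (X : Type*)
    (S : Set (X → Matrix.specialUnitaryGroup (Fin 2) ℂ))
    (hmul : ∀ u ∈ S, ∀ v ∈ S, (fun x => u x * v x) ∈ S)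
    (hinv : ∀ u ∈ S, ∃ v ∈ S, ∀ x,
      ((v x : Matrix (Fin 2) (Fin 2) ℂ)) = ((u x : Matrix (Fin 2) (Fin 2) ℂ))⁻¹) :
    ∀ f ∈ Submodule.span ℂ
        {f : X → ℂ | ∃ u ∈ S, f = fun x => 2⁻¹ * Matrix.trace ((u x : Matrix (Fin 2) (Fin 2) ℂ))},
      ∀ g ∈ Submodule.span ℂ
        {f : X → ℂ | ∃ u ∈ S, f = fun x => 2⁻¹ * Matrix.trace ((u x : Matrix (Fin 2) (Fin 2) ℂ))},
      f * g ∈ Submodule.span ℂ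
        {f : X → ℂ | ∃ u ∈ S, f = fun x => 2⁻¹ * Matrix.trace ((u x : Matrix (Fin 2) (Fin 2) ℂ))} := by
  set T := {f : X → ℂ | ∃ u ∈ S, f = fun x => 2⁻¹ * Matrix.trace ((u x : Matrix (Fin 2) (Fin 2) ℂ))}
    with hT
  intro f hf g hg
  induction hf using Submodule.span_induction with
  | mem f hfT =>
    induction hg using Submodule.span_induction with
    | mem g hgT =>
      obtain ⟨u, hu, rfl⟩ := hfT
      obtain ⟨v, hv, rfl⟩ := hgT
      obtain ⟨w, hw, hwv⟩ := hinv v hv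
      have key : (fun x => 2⁻¹ * Matrix.trace ((u x : Matrix (Fin 2) (Fin 2) ℂ))) *
          (fun x => 2⁻¹ * Matrix.trace ((v x : Matrix (Fin 2) (Fin 2) ℂ))) =
          (2⁻¹ : ℂ) • (fun x => 2⁻¹ * Matrix.trace (((u x * v x : Matrix.specialUnitaryGroup (Fin 2) ℂ) : Matrix (Fin 2) (Fin 2) ℂ)))
          + (2⁻¹ : ℂ) • (fun x => 2⁻¹ * Matrix.trace (((u x * w x : Matrix.specialUnitaryGroup (Fin 2) ℂ) : Matrix (Fin 2) (Fin 2) ℂ))) := by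
        funext x
        have hdet : ((v x : Matrix (Fin 2) (Fin 2) ℂ)).det = 1 :=
          (Matrix.mem_specialUnitaryGroup_iff.mp (v x).property).2
        have hinveq : ((v x : Matrix (Fin 2) (Fin 2) ℂ))⁻¹ =
            Matrix.adjugate (v x : Matrix (Fin 2) (Fin 2) ℂ) := by
          rw [Matrix.inv_def, hdet]
          simp
        have := trace_mul_adjugate_fin_two (u x : Matrix (Fin 2) (Fin 2) ℂ)
          (v x : Matrix (Fin 2) (Fin 2) ℂ)
        have hcoe : ∀ (a b : Matrix.specialUnitaryGroup (Fin 2) ℂ),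
            ((a * b : Matrix.specialUnitaryGroup (Fin 2) ℂ) : Matrix (Fin 2) (Fin 2) ℂ) =
              (a : Matrix (Fin 2) (Fin 2) ℂ) * (b : Matrix (Fin 2) (Fin 2) ℂ) := fun _ _ => rfl
        simp only [Pi.mul_apply, Pi.add_apply, Pi.smul_apply, smul_eq_mul, hcoe, hwv, hinveq]
        linear_combination (2⁻¹*2⁻¹ : ℂ) * this
      rw [key]
      exact Submodule.add_mem _
        (Submodule.smul_mem _ _ (Submodule.subset_span ⟨_, hmul u hu v hv, rfl⟩))
        (Submodule.smul_mem _ _ (Submodule.subset_span ⟨_, hmul u hu w hw, rfl⟩))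
    | zero => simp only [zero_mul, mul_zero]; exact (Submodule.span ℂ T).zero_mem
    | add g₁ g₂ _ _ ih1 ih2 =>
      rw [mul_add]; exact Submodule.add_mem _ ih1 ih2
    | smul c g _ ih =>
      rw [mul_smul_comm]; exact Submodule.smul_mem _ _ ih
  | zero => simp only [zero_mul, mul_zero]; exact (Submodule.span ℂ T).zero_mem
  | add f₁ f₂ _ _ ih1 ih2 =>
    rw [add_mul]; exact Submodule.add_mem _ ih1 ih2
  | smul c f _ ih =>
    rw [smul_mul_assoc]; exact Submodule.smul_mem _ _ ih
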